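/- Let r = (R_j)_{j≥1} be a generic sequence of radii and c ∈ C(r). Then: (1) for every z ∈ A ∪ B_0 with z ≠ 0, |f_c(z)| = φ(|z|); and (2) for each j ≥ 1, f_c maps B_j bijectively onto the disk {w ∈ ℂ_p : |w| < φ(R_j)}, and for all z, w ∈ B_j one has |f_c(z) − f_c(w)| = (φ(R_j)/R_j)·|z − w|. -/

import Mathlib

noncomputable section

/-- `K` is a model of `ℂ_p`, the completion of an algebraic closure of `ℚ_p`:
it is a complete, algebraically closed, nonarchimedean normed field whose norm
extends the `p`-adic absolute value and in which the algebraic elements over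
`ℚ_p` are dense. -/
structure IsCp (p : ℕ) [Fact p.Prime] (K : Type*) [NormedField K] [Algebra ℚ_[p] K] : Prop where
  complete : CompleteSpace K
  norm_extends : ∀ x : ℚ_[p], ‖algebraMap ℚ_[p] K x‖ = ‖x‖
  isAlgClosed : IsAlgClosed K
  dense_algebraic : Dense {x : K | IsAlgebraic ℚ_[p] x}
  isNonarch : ∀ x y : K, ‖x + y‖ ≤ max ‖x‖ ‖y‖

/-- `ϱ = p^{-1/(p-1)}`. -/
def rho (p : ℕ) : ℝ := (p : ℝ) ^ (-1 / ((p : ℝ) - 1))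

/-- `R` is a sequence of radii: strictly increasing (for indices `≥ 1`),
with `R 1 > p`, tending to infinity. -/
def IsRadii (p : ℕ) (R : ℕ → ℝ) : Prop :=
  (∀ j, 1 ≤ j → R j < R (j + 1)) ∧ (p : ℝ) < R 1 ∧
    Filter.Tendsto R Filter.atTop Filter.atTop

/-- The piecewise-monomial map `φ`: for `R_{j-1} < t ≤ R_j` (with `R_0 := 0`),
`φ(t) = p (R_1 ⋯ R_{j-1})⁻¹ t^{p+j-1}`. -/
def phi (p : ℕ) (R : ℕ → ℝ) (t : ℝ) : ℝ :=
  let j := sInf {j : ℕ | 1 ≤ j ∧ t ≤ R j}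
  (p : ℝ) * (∏ i ∈ Finset.Icc 1 (j - 1), R i)⁻¹ * t ^ (p + j - 1)

/-- A generic sequence of radii. -/
def IsGenericRadii (p : ℕ) (R : ℕ → ℝ) : Prop :=
  IsRadii p R ∧ ∀ i j n : ℕ, 1 ≤ i → i < j → 1 ≤ n → (phi p R)^[n] (R i) ≠ R j

/-- Membership in the parameter space `C(r)`: `|c_j| = R_j` for all `j ≥ 1`. -/
def InC (p : ℕ) [Fact p.Prime] {K : Type*} [NormedField K] (R : ℕ → ℝ) (c : ℕ → K) : Prop :=
  ∀ j, 1 ≤ j → ‖c j‖ = R j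

/-- The transcendental entire map `f_c(z) = (z^p/p) ∏_{j ≥ 1} (1 - z/c_j)`. -/
def fc (p : ℕ) {K : Type*} [NormedField K] (c : ℕ → K) (z : K) : K :=
  z ^ p / (p : K) * ∏' j : ℕ, (1 - z / c (j + 1))

/-- The disk `B_0 = {|z| < 1}` for `j = 0`, and `B_j = {|z - c_j| < R_j}` for `j ≥ 1`. -/
def Bset {K : Type*} [NormedField K] (R : ℕ → ℝ) (c : ℕ → K) (j : ℕ) : Set K :=
  if j = 0 then {z : K | ‖z‖ < 1} else {z : K | ‖z - c j‖ < R j}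

/-- The set `A`, complement of all the disks `B_j`, `j ≥ 0`. -/
def Aset {K : Type*} [NormedField K] (R : ℕ → ℝ) (c : ℕ → K) : Set K :=
  (⋃ j, Bset R c j)ᶜ

/-- `n_j`, the minimal `n ≥ 1` with `R_j < φ^{∘(n+1)}(1)`. -/
def nseq (p : ℕ) (R : ℕ → ℝ) (j : ℕ) : ℕ :=
  sInf {n : ℕ | 1 ≤ n ∧ R j < (phi p R)^[n + 1] 1}

/-- `S_j = φ⁻¹(R_j)`. -/
def Sse (p : ℕ) (R : ℕ → ℝ) (j : ℕ) : ℝ := Function.invFun (phi p R) (R j)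

/-- `λ_j = φ(R_j)/R_j`. -/
def lam (p : ℕ) (R : ℕ → ℝ) (j : ℕ) : ℝ := phi p R (R j) / R j

/-- `L_k`: index of the first symbol of the `k`-th block `B_0^{m_k} A^{n_k} B_k^{…}`
of the itinerary `α(m, ℓ)`; `L_1 = 0` and `L_{k+1} = L_k + m_k + n_k + ℓ_{k+1}`. -/
def Lseq (m n l : ℕ → ℕ) : ℕ → ℕ
  | 0 => 0
  | 1 => 0
  | k + 2 => Lseq m n l (k + 1) + m (k + 1) + n (k + 1) + l (k + 2)

/-- `N_k = L_k + m_k + n_k`, the index of the final symbol `B_k` of the truncated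
itinerary `α^{(k)}` (so `α^{(k)}` has length `N_k + 1`). -/
def Nseq (m n l : ℕ → ℕ) (k : ℕ) : ℕ := Lseq m n l k + m k + n k

/-- The symbol (`some 0 = B_0`, `none = A`, `some k = B_k`) at position `i` of the
itinerary `α(m,ℓ) = B_0^{m_1} A^{n_1} B_1^{ℓ_2} B_0^{m_2} A^{n_2} B_2^{ℓ_3} ⋯`. -/
def itin (m n l : ℕ → ℕ) (i : ℕ) : Option ℕ :=
  let k := sSup {k : ℕ | 1 ≤ k ∧ Lseq m n l k ≤ i}
  if i < Lseq m n l k + m k then some 0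
  else if i < Lseq m n l k + m k + n k then none
  else some k

/-- The subset of `ℂ_p` corresponding to a symbol of the alphabet `{A, B_0, B_1, …}`. -/
def symbSet {K : Type*} [NormedField K] (R : ℕ → ℝ) (c : ℕ → K) : Option ℕ → Set K
  | none => Aset R c
  | some j => Bset R c j

/-- Condition (3.2) at `k`: `ϱ⁻¹ R_k p^{-m_k} λ_k^{ℓ_{k+1}} < 1`. -/
def Cond32 (p : ℕ) (R : ℕ → ℝ) (m l : ℕ → ℕ) (k : ℕ) : Prop :=
  (rho p)⁻¹ * R k * ((p : ℝ) ^ m k)⁻¹ * lam p R k ^ l (k + 1) < 1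

/-- Condition (3.3) for `k`: for all `2 ≤ j < k`,
`ε_k < ϱ^{k-j} R_k² (R_{j-1} S_{j-1})⁻¹ λ_{j-1}^{-ℓ_j}`. -/
def Cond33 (p : ℕ) (R : ℕ → ℝ) (ε : ℕ → ℝ) (l : ℕ → ℕ) (k : ℕ) : Prop :=
  ∀ j, 2 ≤ j → j < k →
    ε k < rho p ^ (k - j) * R k ^ 2 * (R (j - 1) * Sse p R (j - 1))⁻¹ *
      (lam p R (j - 1) ^ l j)⁻¹

/-- Condition (3.4) for `k`: for all `2 ≤ j ≤ k`,
`ϱ^{-2} R_{j-1} S_{j-1} λ_{j-1}^{ℓ_j} p^{-m_j} < 1`. -/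
def Cond34 (p : ℕ) (R : ℕ → ℝ) (m l : ℕ → ℕ) (k : ℕ) : Prop :=
  ∀ j, 2 ≤ j → j ≤ k →
    ((rho p) ^ 2)⁻¹ * (R (j - 1) * Sse p R (j - 1)) * lam p R (j - 1) ^ l j *
      ((p : ℝ) ^ m j)⁻¹ < 1

/-- Condition (3.5) at `k`: `p ϱ⁻¹ R_{k+1}² S_k⁻¹ λ_k^{-ℓ_{k+1}} < ε_{k+1}`. -/
def Cond35 (p : ℕ) (R : ℕ → ℝ) (ε : ℕ → ℝ) (l : ℕ → ℕ) (k : ℕ) : Prop :=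
  (p : ℝ) * (rho p)⁻¹ * R (k + 1) ^ 2 * (Sse p R k)⁻¹ * (lam p R k ^ l (k + 1))⁻¹ < ε (k + 1)

/-- `c' ∈ Δ_k(c, ε)`. -/
def InDelta (p : ℕ) [Fact p.Prime] {K : Type*} [NormedField K] (R : ℕ → ℝ) (c : ℕ → K)
    (ε : ℕ → ℝ) (k : ℕ) (c' : ℕ → K) : Prop :=
  InC p R c' ∧ (∀ j, 1 ≤ j → j < k → c' j = c j) ∧ ∀ j, k ≤ j → ‖c' j - c j‖ < ε j

/-- `c' ∈ U_k(c, ε)`. -/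
def InU (p : ℕ) [Fact p.Prime] {K : Type*} [NormedField K] (R : ℕ → ℝ) (c : ℕ → K)
    (k : ℕ) (ε : ℝ) (c' : ℕ → K) : Prop :=
  InC p R c' ∧ ‖c' k - c k‖ < ε ∧ ∀ j, 1 ≤ j → j ≠ k → c' j = c j

/-!
In an ultrametric field the norm of a convergent product is the product of the norms of its
factors, and `‖1 - z / c_i‖` equals `‖z‖ / R_i` if `‖z‖ > R_i` and `1` if `‖z‖ < R_i`; on
`A ∪ B₀` this makes `‖f_c(z)‖` the monomial `φ(‖z‖)`. On `B_j` write
`f_c(z) = (1 - z / c_j) g(z)`. Each factor of `g` has constant norm on `B_j` and moves by at most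
the relative amount `‖z - w‖ / R_j`, so `g` has constant norm `φ(R_j)` and `‖g z - g w‖` is at
most `φ(R_j) ‖z - w‖ / R_j`; since `1 - z / c_j` is affine with slope of norm `1 / R_j`, the
strict ultrametric inequality makes `f_c` a similarity of ratio `φ(R_j) / R_j` on `B_j`.
Surjectivity onto the disk is the contraction principle for `z ↦ c_j - c_j w / g(z)`, whose
ratio is `‖w‖ / φ(R_j) < 1`.
-/

open Filter Topology Finset

section UltrametricProducts

variable {K : Type*} [NormedField K]

lemma norm_tprod_eq_prod_of_norm_eq_one {ι : Type*} {u : ι → K} (hu : Multipliable u)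
    {s : Finset ι} (hs : ∀ i ∉ s, ‖u i‖ = 1) : ‖∏' i, u i‖ = ∏ i ∈ s, ‖u i‖ := by
  rw [hu.hasProd.norm.tprod_eq.symm, tprod_eq_prod hs]

lemma norm_one_sub_div (z : K) {a : K} (ha : a ≠ 0) : ‖1 - z / a‖ = ‖a - z‖ / ‖a‖ := by
  rw [one_sub_div ha, norm_div]

variable [IsUltrametricDist K]

lemma norm_add_eq_of_norm_lt {x y : K} (h : ‖x‖ < ‖y‖) : ‖x + y‖ = ‖y‖ := by
  rw [IsUltrametricDist.norm_add_eq_max_of_norm_ne_norm h.ne, max_eq_right h.le]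

lemma norm_sub_eq_of_norm_lt {x y : K} (h : ‖y‖ < ‖x‖) : ‖x - y‖ = ‖x‖ := by
  rw [sub_eq_neg_add, norm_add_eq_of_norm_lt (by rwa [norm_neg])]

lemma norm_le_of_norm_sub_le_mul {C : ℝ} (hC : C ≤ 1) {a b : K} (h : ‖a - b‖ ≤ C * ‖a‖) :
    ‖b‖ ≤ ‖a‖ := by
  calc ‖b‖ = ‖a + -(a - b)‖ := by ring_nf
    _ ≤ max ‖a‖ ‖a - b‖ := by
      simpa [norm_sub_rev] using IsUltrametricDist.norm_add_le_max a (-(a - b))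
    _ ≤ ‖a‖ := max_le le_rfl (h.trans (mul_le_of_le_one_left (norm_nonneg a) hC))

lemma norm_mul_sub_mul_le {C : ℝ} (hC : C ≤ 1) {a b a' b' : K}
    (ha : ‖a - a'‖ ≤ C * ‖a‖) (hb : ‖b - b'‖ ≤ C * ‖b‖) :
    ‖a * b - a' * b'‖ ≤ C * ‖a * b‖ := by
  have hb' := norm_le_of_norm_sub_le_mul hC hb
  calc ‖a * b - a' * b'‖ = ‖a * (b - b') + (a - a') * b'‖ := by ring_nf
    _ ≤ max (‖a‖ * ‖b - b'‖) (‖a - a'‖ * ‖b'‖) := by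
      simpa only [norm_mul] using IsUltrametricDist.norm_add_le_max (a * (b - b')) ((a - a') * b')
    _ ≤ C * ‖a * b‖ := by
      rw [norm_mul]
      refine max_le ?_ ?_
      · calc ‖a‖ * ‖b - b'‖ ≤ ‖a‖ * (C * ‖b‖) := by gcongr
          _ = C * (‖a‖ * ‖b‖) := by ring
      · calc ‖a - a'‖ * ‖b'‖ ≤ C * ‖a‖ * ‖b‖ := by gcongr; exact (norm_nonneg _).trans ha
          _ = C * (‖a‖ * ‖b‖) := by ring

lemma norm_prod_sub_prod_le {ι : Type*} {C : ℝ} (hC₀ : 0 ≤ C) (hC : C ≤ 1) (s : Finset ι)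
    {a b : ι → K} (h : ∀ i ∈ s, ‖a i - b i‖ ≤ C * ‖a i‖) :
    ‖∏ i ∈ s, a i - ∏ i ∈ s, b i‖ ≤ C * ‖∏ i ∈ s, a i‖ := by
  classical
  induction s using Finset.induction_on with
  | empty => simpa using hC₀
  | insert i s hi ih =>
    rw [prod_insert hi, prod_insert hi]
    exact norm_mul_sub_mul_le hC (h i (mem_insert_self i s))
      (ih fun k hk => h k (mem_insert_of_mem hk))

lemma norm_pow_sub_pow_le {C : ℝ} (hC₀ : 0 ≤ C) (hC : C ≤ 1) {a b : K}
    (h : ‖a - b‖ ≤ C * ‖a‖) (n : ℕ) : ‖a ^ n - b ^ n‖ ≤ C * ‖a ^ n‖ := by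
  simpa using norm_prod_sub_prod_le hC₀ hC (range n) (a := fun _ => a) (b := fun _ => b)
    fun _ _ => h

lemma norm_tprod_sub_tprod_le {ι : Type*} {C : ℝ} (hC₀ : 0 ≤ C) (hC : C ≤ 1) {a b : ι → K}
    (ha : Multipliable a) (hb : Multipliable b) (h : ∀ i, ‖a i - b i‖ ≤ C * ‖a i‖) :
    ‖∏' i, a i - ∏' i, b i‖ ≤ C * ‖∏' i, a i‖ :=
  le_of_tendsto_of_tendsto' (Tendsto.sub ha.hasProd hb.hasProd).norm
    (ha.hasProd.norm.const_mul C) fun s => by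
      rw [← norm_prod]; exact norm_prod_sub_prod_le hC₀ hC s fun i _ => h i

variable [CompleteSpace K]

lemma multipliable_of_tendsto_cofinite_one_of_norm_sub_one_le_one {ι : Type*} {u : ι → K}
    (hu : Tendsto u cofinite (𝓝 1)) (h₁ : ∀ i, ‖u i - 1‖ ≤ 1) : Multipliable u := by
  classical
  refine CompleteSpace.complete (Metric.cauchySeq_iff'.2 fun ε hε => ?_)
  have hδ : 0 < min (ε / 2) 1 := by positivity
  have hT := eventually_cofinite.1 (hu.eventually (Metric.closedBall_mem_nhds 1 hδ))
  refine ⟨hT.toFinset, fun s hs => ?_⟩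
  have hhead : ‖∏ i ∈ hT.toFinset, u i‖ ≤ 1 := by
    rw [norm_prod]
    refine prod_le_one (fun _ _ => norm_nonneg _) fun i _ => ?_
    simpa using norm_le_of_norm_sub_le_mul le_rfl (a := 1) (b := u i)
      (by simpa [norm_sub_rev] using h₁ i)
  have htail : ‖∏ i ∈ s \ hT.toFinset, u i - 1‖ ≤ min (ε / 2) 1 := by
    have := norm_prod_sub_prod_le hδ.le (min_le_right _ _) (s \ hT.toFinset) (a := fun _ => 1)
      (b := u) fun i hi => by
        simpa [norm_sub_rev, dist_eq_norm] using (mem_sdiff.1 hi).2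
    simpa [norm_sub_rev] using this
  rw [dist_eq_norm, ← prod_sdiff hs, ← sub_one_mul, norm_mul]
  calc _ ≤ min (ε / 2) 1 * 1 := mul_le_mul htail hhead (norm_nonneg _) hδ.le
    _ < ε := by linarith [min_le_left (ε / 2) 1]

theorem IsUltrametricDist.multipliable_of_tendsto_cofinite_one {ι : Type*} {u : ι → K}
    (hu : Tendsto u cofinite (𝓝 1)) : Multipliable u := by
  have hs : {i | u i ∉ Metric.closedBall 1 1}.Finite :=
    eventually_cofinite.1 (hu.eventually (Metric.closedBall_mem_nhds (1 : K) one_pos))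
  have := hs.to_subtype
  refine Multipliable.compl_add (s := {i | u i ∉ Metric.closedBall 1 1}) ?_ Multipliable.of_finite
  refine multipliable_of_tendsto_cofinite_one_of_norm_sub_one_le_one
    (hu.comp Subtype.val_injective.tendsto_cofinite) fun i => ?_
  simpa [dist_eq_norm] using i.2

end UltrametricProducts

namespace IsRadii

variable {p : ℕ} {R : ℕ → ℝ}

lemma lt_of_lt (hR : IsRadii p R) {i j : ℕ} (hi : 1 ≤ i) (hij : i < j) : R i < R j := by
  have hmono : StrictMono fun n => R (n + 1) :=
    strictMono_nat_of_lt_succ fun n => hR.1 (n + 1) (by omega)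
  simpa [Nat.sub_add_cancel hi, Nat.sub_add_cancel (hi.trans hij.le)] using
    hmono (Nat.sub_lt_sub_right hi hij)

lemma one_lt [Fact p.Prime] (hR : IsRadii p R) {j : ℕ} (hj : 1 ≤ j) : 1 < R j := by
  have hp : (1 : ℝ) < p := by exact_mod_cast (Fact.out : p.Prime).one_lt
  rcases hj.eq_or_lt with rfl | hj
  · exact hp.trans hR.2.1
  · exact hp.trans (hR.2.1.trans (hR.lt_of_lt le_rfl hj))

lemma pos [Fact p.Prime] (hR : IsRadii p R) {j : ℕ} (hj : 1 ≤ j) : 0 < R j :=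
  one_pos.trans (hR.one_lt hj)

lemma exists_first_ge (hR : IsRadii p R) (t : ℝ) :
    ∃ j, 1 ≤ j ∧ t ≤ R j ∧ ∀ i, 1 ≤ i → i < j → R i < t := by
  classical
  have hex : ∃ j, 1 ≤ j ∧ t ≤ R j := by
    obtain ⟨N, hN⟩ := (tendsto_atTop.1 hR.2.2 t).exists_forall_of_atTop
    exact ⟨N + 1, by omega, hN (N + 1) (by omega)⟩
  refine ⟨Nat.find hex, (Nat.find_spec hex).1, (Nat.find_spec hex).2, fun i hi hij => ?_⟩
  exact not_le.1 fun h => Nat.find_min hex hij ⟨hi, h⟩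

end IsRadii

lemma phi_eq_of_le_of_lt {p : ℕ} {R : ℕ → ℝ} {t : ℝ} {j : ℕ} (hj : 1 ≤ j) (ht : t ≤ R j)
    (hlt : ∀ i, 1 ≤ i → i < j → R i < t) :
    phi p R t = p * t ^ p * ∏ i ∈ range (j - 1), t / R (i + 1) := by
  have hinf : sInf {k : ℕ | 1 ≤ k ∧ t ≤ R k} = j :=
    le_antisymm (Nat.sInf_le ⟨hj, ht⟩) (le_csInf ⟨j, hj, ht⟩ fun k hk =>
      not_lt.1 fun hkj => (hlt k hk.1 hkj).not_ge hk.2)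
  have hIcc : ∏ i ∈ Icc 1 (j - 1), R i = ∏ i ∈ range (j - 1), R (i + 1) := by
    rw [← Finset.Ico_add_one_right_eq_Icc, prod_Ico_eq_prod_range]
    simp [add_comm]
  simp only [phi, hinf, hIcc, prod_div_distrib, prod_const, card_range]
  rw [show p + j - 1 = p + (j - 1) by omega, pow_add]
  ring

lemma phi_R_eq {p : ℕ} {R : ℕ → ℝ} (hR : IsRadii p R) {j : ℕ} (hj : 1 ≤ j) :
    phi p R (R j) = p * R j ^ p * ∏ i ∈ range (j - 1), R j / R (i + 1) :=
  phi_eq_of_le_of_lt hj le_rfl fun _ hi hij => hR.lt_of_lt hi hij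

lemma phi_R_pos {p : ℕ} [Fact p.Prime] {R : ℕ → ℝ} (hR : IsRadii p R) {j : ℕ} (hj : 1 ≤ j) :
    0 < phi p R (R j) := by
  have hp : 0 < p := (Fact.out : p.Prime).pos
  have hRj := hR.pos hj
  rw [phi_R_eq hR hj]
  exact mul_pos (by positivity) (prod_pos fun i _ => div_pos hRj (hR.pos (by omega)))

section Fc

variable {p : ℕ} {K : Type*} [NormedField K] {R : ℕ → ℝ} {c : ℕ → K}

lemma Bset_eq_ball {j : ℕ} (hj : j ≠ 0) : Bset R c j = Metric.ball (c j) (R j) := by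
  ext z
  simp [Bset, hj, dist_eq_norm]

lemma norm_div_natCast_mul_tprod (hnp : ‖(p : K)‖ = (p : ℝ)⁻¹) (z : K) {u : ℕ → K}
    (hu : Multipliable u) {s : Finset ℕ} (hs : ∀ i ∉ s, ‖u i‖ = 1) :
    ‖z ^ p / (p : K) * ∏' i, u i‖ = p * ‖z‖ ^ p * ∏ i ∈ s, ‖u i‖ := by
  rw [norm_mul, norm_div, norm_pow, hnp, norm_tprod_eq_prod_of_norm_eq_one hu hs, div_inv_eq_mul,
    mul_comm (‖z‖ ^ p)]

variable [Fact p.Prime]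

lemma ne_zero_of_inC (hR : IsRadii p R) (hc : InC p R c) {j : ℕ} (hj : 1 ≤ j) : c j ≠ 0 :=
  norm_ne_zero_iff.1 (by rw [hc j hj]; exact (hR.pos hj).ne')

lemma mem_Bset_self (hR : IsRadii p R) {j : ℕ} (hj : 1 ≤ j) : c j ∈ Bset R c j := by
  rw [Bset_eq_ball (by omega)]
  exact Metric.mem_ball_self (hR.pos hj)

variable [IsUltrametricDist K]

lemma norm_one_sub_div_of_lt (hR : IsRadii p R) (hc : InC p R c) {i : ℕ} (hi : 1 ≤ i) {z : K}
    (h : ‖z‖ < R i) : ‖1 - z / c i‖ = 1 := by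
  rw [norm_one_sub_div z (ne_zero_of_inC hR hc hi), norm_sub_eq_of_norm_lt (by rwa [hc i hi]),
    div_self (norm_ne_zero_iff.2 (ne_zero_of_inC hR hc hi))]

lemma norm_one_sub_div_of_gt (hR : IsRadii p R) (hc : InC p R c) {i : ℕ} (hi : 1 ≤ i) {z : K}
    (h : R i < ‖z‖) : ‖1 - z / c i‖ = ‖z‖ / R i := by
  rw [norm_one_sub_div z (ne_zero_of_inC hR hc hi), norm_sub_rev,
    norm_sub_eq_of_norm_lt (by rwa [hc i hi]), hc i hi]

lemma norm_eq_of_mem_Bset (hc : InC p R c) {j : ℕ} (hj : 1 ≤ j) {z : K}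
    (hz : z ∈ Bset R c j) : ‖z‖ = R j := by
  rw [Bset_eq_ball (by omega), Metric.mem_ball, dist_eq_norm, ← hc j hj] at hz
  have := norm_add_eq_of_norm_lt hz
  rwa [sub_add_cancel, hc j hj] at this

lemma norm_sub_lt_of_mem_Bset {j : ℕ} (hj : 1 ≤ j) {z w : K} (hz : z ∈ Bset R c j)
    (hw : w ∈ Bset R c j) : ‖z - w‖ < R j := by
  rw [Bset_eq_ball (by omega)] at hz hw
  rw [← dist_eq_norm]
  exact (IsUltrametricDist.dist_triangle_max z (c j) w).trans_lt
    (max_lt hz (by rwa [dist_comm]))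

/-- On the sphere `‖z‖ = R j`, a point with `‖1 - z / c j‖ < 1` lies in `B_j`. -/
lemma norm_one_sub_div_of_le (hR : IsRadii p R) (hc : InC p R c) {j : ℕ} (hj : 1 ≤ j) {z : K}
    (hz : z ∈ Aset R c ∪ Bset R c 0) (h : ‖z‖ ≤ R j) : ‖1 - z / c j‖ = 1 := by
  rw [norm_one_sub_div z (ne_zero_of_inC hR hc hj), hc j hj, div_eq_one_iff_eq (hR.pos hj).ne']
  refine le_antisymm ?_ (not_lt.1 fun hlt => ?_)
  · calc ‖c j - z‖ ≤ max ‖c j‖ ‖z‖ := by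
          simpa [sub_eq_add_neg] using IsUltrametricDist.norm_add_le_max (c j) (-z)
      _ ≤ R j := by rw [hc j hj]; exact max_le le_rfl h
  · have hzj : z ∈ Bset R c j := by
      rw [Bset_eq_ball (by omega), Metric.mem_ball, dist_eq_norm, norm_sub_rev]
      exact hlt
    rcases hz with hA | hB
    · exact hA (Set.mem_iUnion.2 ⟨j, hzj⟩)
    · have : ‖z‖ < 1 := by simpa [Bset] using hB
      linarith [norm_eq_of_mem_Bset hc hj hzj, hR.one_lt hj]

lemma tendsto_one_sub_div (hR : IsRadii p R) (hc : InC p R c) (z : K) :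
    Tendsto (fun i => 1 - z / c (i + 1)) atTop (𝓝 1) := by
  have hc' : Tendsto (fun i => c (i + 1)) atTop (Bornology.cobounded K) := by
    refine tendsto_norm_atTop_iff_cobounded.1 ?_
    exact (hR.2.2.comp (tendsto_add_atTop_nat 1)).congr fun i => (hc (i + 1) (by omega)).symm
  simpa [div_eq_mul_inv] using
    tendsto_const_nhds.sub ((tendsto_inv₀_cobounded.comp hc').const_mul z)

lemma norm_one_sub_div_of_mem_Bset (hR : IsRadii p R) (hc : InC p R c) {i j : ℕ} (hj : 1 ≤ j)
    {z : K} (hz : z ∈ Bset R c j) (hij : j < i) : ‖1 - z / c i‖ = 1 :=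
  norm_one_sub_div_of_lt hR hc (by omega) (norm_eq_of_mem_Bset hc hj hz ▸ hR.lt_of_lt hj hij)

variable [CompleteSpace K]

lemma multipliable_one_sub_div (hR : IsRadii p R) (hc : InC p R c) (z : K) :
    Multipliable fun i => 1 - z / c (i + 1) :=
  IsUltrametricDist.multipliable_of_tendsto_cofinite_one
    (Nat.cofinite_eq_atTop ▸ tendsto_one_sub_div hR hc z)

theorem norm_fc_eq_phi (hR : IsRadii p R) (hc : InC p R c) (hnp : ‖(p : K)‖ = (p : ℝ)⁻¹)
    {z : K} (hz : z ∈ Aset R c ∪ Bset R c 0) : ‖fc p c z‖ = phi p R ‖z‖ := by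
  obtain ⟨j, hj, hzj, hlt⟩ := hR.exists_first_ge ‖z‖
  rw [phi_eq_of_le_of_lt hj hzj hlt, fc,
    norm_div_natCast_mul_tprod hnp z (multipliable_one_sub_div hR hc z) (s := range (j - 1))]
  · refine congrArg _ (prod_congr rfl fun i hi => ?_)
    exact norm_one_sub_div_of_gt hR hc (by omega) (hlt _ (by omega) (by simp at hi; omega))
  · intro i hi
    simp only [mem_range, not_lt] at hi
    rcases (show j ≤ i + 1 by omega).eq_or_lt with rfl | hji
    · exact norm_one_sub_div_of_le hR hc hj hz hzj
    · exact norm_one_sub_div_of_lt hR hc (by omega) (hzj.trans_lt (hR.lt_of_lt hj hji))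

def fcCofactor (p : ℕ) (c : ℕ → K) (j : ℕ) (z : K) : K :=
  z ^ p / (p : K) * ∏' i, if i = j - 1 then 1 else 1 - z / c (i + 1)

lemma multipliable_ite_one_sub_div (hR : IsRadii p R) (hc : InC p R c) (j : ℕ) (z : K) :
    Multipliable fun i => if i = j - 1 then 1 else 1 - z / c (i + 1) :=
  IsUltrametricDist.multipliable_of_tendsto_cofinite_one <| Nat.cofinite_eq_atTop ▸
    (tendsto_one_sub_div hR hc z).congr'
      ((eventually_ne_atTop (j - 1)).mono fun _ hi => (if_neg hi).symm)

lemma fc_eq_mul_fcCofactor (hR : IsRadii p R) (hc : InC p R c) {j : ℕ} (hj : 1 ≤ j) (z : K) :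
    fc p c z = (1 - z / c j) * fcCofactor p c j z := by
  have h := eq_mul_of_hasProd_ite (multipliable_one_sub_div hR hc z).hasProd (j - 1) _
    (multipliable_ite_one_sub_div hR hc j z).hasProd
  rw [Nat.sub_add_cancel hj] at h
  rw [fc, fcCofactor, h]
  ring

theorem norm_fcCofactor (hR : IsRadii p R) (hc : InC p R c) (hnp : ‖(p : K)‖ = (p : ℝ)⁻¹)
    {j : ℕ} (hj : 1 ≤ j) {z : K} (hz : z ∈ Bset R c j) :
    ‖fcCofactor p c j z‖ = phi p R (R j) := by
  have hzR := norm_eq_of_mem_Bset hc hj hz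
  rw [fcCofactor, phi_R_eq hR hj, norm_div_natCast_mul_tprod hnp z
    (multipliable_ite_one_sub_div hR hc j z) (s := range (j - 1)), hzR]
  · refine congrArg _ (prod_congr rfl fun i hi => ?_)
    have hi : i + 1 < j := by simp at hi; omega
    rw [if_neg (by omega),
      norm_one_sub_div_of_gt hR hc (by omega) (hzR ▸ hR.lt_of_lt (by omega) hi), hzR]
  · intro i hi
    simp only [mem_range, not_lt] at hi
    split_ifs with h
    · exact norm_one
    · exact norm_one_sub_div_of_mem_Bset hR hc hj hz (by omega)

theorem norm_fcCofactor_sub_le (hR : IsRadii p R) (hc : InC p R c)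
    (hnp : ‖(p : K)‖ = (p : ℝ)⁻¹) {j : ℕ} (hj : 1 ≤ j) {z w : K} (hz : z ∈ Bset R c j)
    (hw : w ∈ Bset R c j) :
    ‖fcCofactor p c j z - fcCofactor p c j w‖ ≤ ‖z - w‖ / R j * phi p R (R j) := by
  have hzR := norm_eq_of_mem_Bset hc hj hz
  have hRj := hR.pos hj
  set C := ‖z - w‖ / R j
  have hC₀ : 0 ≤ C := by positivity
  have hC : C ≤ 1 := (div_le_one hRj).2 (norm_sub_lt_of_mem_Bset hj hz hw).le
  have hzC : ‖z - w‖ = C * ‖z‖ := by rw [hzR, div_mul_cancel₀ _ hRj.ne']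
  rw [← norm_fcCofactor hR hc hnp hj hz, fcCofactor, fcCofactor]
  refine norm_mul_sub_mul_le hC ?_ (norm_tprod_sub_tprod_le hC₀ hC
    (multipliable_ite_one_sub_div hR hc j z) (multipliable_ite_one_sub_div hR hc j w) fun i => ?_)
  · rw [← sub_div, norm_div, norm_div, ← mul_div_assoc]
    gcongr
    exact norm_pow_sub_pow_le hC₀ hC hzC.le p
  · split_ifs with hi
    · simp [hC₀]
    rw [sub_sub_sub_cancel_left, ← sub_div, norm_div, hc (i + 1) (by omega), norm_sub_rev]
    rcases (show i + 1 < j ∨ j < i + 1 by omega) with hlt | hgt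
    · rw [norm_one_sub_div_of_gt hR hc (by omega) (hzR ▸ hR.lt_of_lt (by omega) hlt),
        ← mul_div_assoc, ← hzC]
    · rw [norm_one_sub_div_of_mem_Bset hR hc hj hz hgt, mul_one]
      exact div_le_div_of_nonneg_left (norm_nonneg _) hRj (hR.lt_of_lt hj hgt).le

theorem norm_fc_sub_fc (hR : IsRadii p R) (hc : InC p R c) (hnp : ‖(p : K)‖ = (p : ℝ)⁻¹)
    {j : ℕ} (hj : 1 ≤ j) {z w : K} (hz : z ∈ Bset R c j) (hw : w ∈ Bset R c j) :
    ‖fc p c z - fc p c w‖ = phi p R (R j) / R j * ‖z - w‖ := by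
  rcases eq_or_ne z w with rfl | hzw
  · simp
  have hRj := hR.pos hj
  have hφ := phi_R_pos hR hj
  set g := fcCofactor p c j
  have hmain : ‖(w - z) / c j * g w‖ = phi p R (R j) / R j * ‖z - w‖ := by
    rw [norm_mul, norm_div, hc j hj, norm_sub_rev, norm_fcCofactor hR hc hnp hj hw]
    ring
  have hfactor : ‖1 - z / c j‖ < 1 := by
    rw [norm_one_sub_div z (ne_zero_of_inC hR hc hj), hc j hj, div_lt_one hRj, norm_sub_rev]
    simpa [Bset_eq_ball (show j ≠ 0 by omega), dist_eq_norm] using hz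
  have herror : ‖(1 - z / c j) * (g z - g w)‖ < phi p R (R j) / R j * ‖z - w‖ := by
    rw [norm_mul]
    calc ‖1 - z / c j‖ * ‖g z - g w‖ ≤ ‖1 - z / c j‖ * (‖z - w‖ / R j * phi p R (R j)) := by
          gcongr; exact norm_fcCofactor_sub_le hR hc hnp hj hz hw
      _ < 1 * (‖z - w‖ / R j * phi p R (R j)) := by
          gcongr
          exact mul_pos (div_pos (norm_pos_iff.2 (sub_ne_zero.2 hzw)) hRj) hφ
      _ = phi p R (R j) / R j * ‖z - w‖ := by ring
  have hsplit : (1 - z / c j) * g z - (1 - w / c j) * g w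
      = (1 - z / c j) * (g z - g w) + (w - z) / c j * g w := by ring
  rw [fc_eq_mul_fcCofactor hR hc hj, fc_eq_mul_fcCofactor hR hc hj, hsplit,
    norm_add_eq_of_norm_lt (hmain ▸ herror), hmain]

lemma fc_self (hR : IsRadii p R) (hc : InC p R c) {j : ℕ} (hj : 1 ≤ j) : fc p c (c j) = 0 := by
  rw [fc_eq_mul_fcCofactor hR hc hj, div_self (ne_zero_of_inC hR hc hj), sub_self, zero_mul]

lemma norm_fc_of_mem_Bset (hR : IsRadii p R) (hc : InC p R c) (hnp : ‖(p : K)‖ = (p : ℝ)⁻¹)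
    {j : ℕ} (hj : 1 ≤ j) {z : K} (hz : z ∈ Bset R c j) :
    ‖fc p c z‖ = phi p R (R j) / R j * ‖z - c j‖ := by
  simpa [fc_self hR hc hj] using norm_fc_sub_fc hR hc hnp hj hz (mem_Bset_self hR hj)

lemma fcCofactor_ne_zero (hR : IsRadii p R) (hc : InC p R c) (hnp : ‖(p : K)‖ = (p : ℝ)⁻¹)
    {j : ℕ} (hj : 1 ≤ j) {z : K} (hz : z ∈ Bset R c j) : fcCofactor p c j z ≠ 0 :=
  norm_ne_zero_iff.1 (by rw [norm_fcCofactor hR hc hnp hj hz]; exact (phi_R_pos hR hj).ne')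

lemma norm_inv_fcCofactor_sub_le (hR : IsRadii p R) (hc : InC p R c)
    (hnp : ‖(p : K)‖ = (p : ℝ)⁻¹) {j : ℕ} (hj : 1 ≤ j) {z w : K} (hz : z ∈ Bset R c j)
    (hw : w ∈ Bset R c j) :
    ‖(fcCofactor p c j z)⁻¹ - (fcCofactor p c j w)⁻¹‖ ≤ ‖z - w‖ / (R j * phi p R (R j)) := by
  have hφ := phi_R_pos hR hj
  rw [inv_sub_inv (fcCofactor_ne_zero hR hc hnp hj hz) (fcCofactor_ne_zero hR hc hnp hj hw),
    norm_div, norm_mul, norm_fcCofactor hR hc hnp hj hz, norm_fcCofactor hR hc hnp hj hw,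
    norm_sub_rev, div_le_iff₀ (by positivity)]
  calc _ ≤ ‖z - w‖ / R j * phi p R (R j) := norm_fcCofactor_sub_le hR hc hnp hj hz hw
    _ = _ := by field_simp

theorem surjOn_fc (hR : IsRadii p R) (hc : InC p R c) (hnp : ‖(p : K)‖ = (p : ℝ)⁻¹)
    {j : ℕ} (hj : 1 ≤ j) :
    Set.SurjOn (fc p c) (Bset R c j) {w : K | ‖w‖ < phi p R (R j)} := by
  intro w (hw : ‖w‖ < phi p R (R j))
  have hφ := phi_R_pos hR hj
  have hRj := hR.pos hj
  set g := fcCofactor p c j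
  have hg : ∀ x ∈ Bset R c j, ‖g x‖ = phi p R (R j) := fun _ hx => norm_fcCofactor hR hc hnp hj hx
  set Φ : K → K := fun x => c j - c j * w * (g x)⁻¹
  have hmaps : Set.MapsTo Φ (Bset R c j) (Bset R c j) := by
    intro x hx
    rw [Bset_eq_ball (by omega), Metric.mem_ball, dist_eq_norm]
    simp only [Φ, sub_sub_cancel_left, norm_neg, norm_mul, norm_inv, hc j hj, hg x hx]
    rw [← div_eq_mul_inv, div_lt_iff₀ hφ]
    gcongr
  set q : NNReal := ⟨‖w‖ / phi p R (R j), by positivity⟩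
  have hcontr : ContractingWith q (hmaps.restrict Φ _ _) := by
    refine ⟨by rw [← NNReal.coe_lt_coe]; exact (div_lt_one hφ).2 hw, ?_⟩
    refine LipschitzWith.of_dist_le_mul fun x y => ?_
    rw [Subtype.dist_eq, Subtype.dist_eq, dist_eq_norm, dist_eq_norm]
    calc ‖Φ x - Φ y‖ = R j * ‖w‖ * ‖(g x)⁻¹ - (g y)⁻¹‖ := by
          rw [← norm_neg, ← hc j hj, ← norm_mul, ← norm_mul]; simp only [Φ]; ring_nf
      _ ≤ R j * ‖w‖ * (‖(x : K) - y‖ / (R j * phi p R (R j))) := by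
          exact mul_le_mul_of_nonneg_left (norm_inv_fcCofactor_sub_le hR hc hnp hj x.2 y.2)
            (by positivity)
      _ = ‖w‖ / phi p R (R j) * ‖(x : K) - y‖ := by field_simp
  obtain ⟨z, hz, hfix, -⟩ := hcontr.exists_fixedPoint'
    (Bset_eq_ball (R := R) (c := c) (show j ≠ 0 by omega) ▸
      (IsUltrametricDist.isClosed_ball (c j) (R j)).isComplete) hmaps
    (mem_Bset_self hR hj) (edist_ne_top _ _)
  refine ⟨z, hz, ?_⟩
  have hΦz : c j - c j * w * (g z)⁻¹ = z := hfix
  have hgz : g z ≠ 0 := fcCofactor_ne_zero hR hc hnp hj hz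
  have hcj := ne_zero_of_inC hR hc hj
  rw [fc_eq_mul_fcCofactor hR hc hj]
  change (1 - z / c j) * g z = w
  field_simp at hΦz
  rw [one_sub_div hcj, div_mul_eq_mul_div, div_eq_iff hcj]
  linear_combination hΦz

theorem bijOn_fc (hR : IsRadii p R) (hc : InC p R c) (hnp : ‖(p : K)‖ = (p : ℝ)⁻¹)
    {j : ℕ} (hj : 1 ≤ j) :
    Set.BijOn (fc p c) (Bset R c j) {w : K | ‖w‖ < phi p R (R j)} := by
  have hRj := hR.pos hj
  have hratio : 0 < phi p R (R j) / R j := div_pos (phi_R_pos hR hj) hRj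
  refine ⟨fun z hz => ?_, fun z hz w hw hzw => ?_, surjOn_fc hR hc hnp hj⟩
  · have hzc : ‖z - c j‖ < R j := by
      simpa [Bset_eq_ball (show j ≠ 0 by omega), dist_eq_norm] using hz
    show ‖fc p c z‖ < phi p R (R j)
    rw [norm_fc_of_mem_Bset hR hc hnp hj hz]
    calc phi p R (R j) / R j * ‖z - c j‖ < phi p R (R j) / R j * R j := by gcongr
      _ = phi p R (R j) := div_mul_cancel₀ _ hRj.ne'
  · have h := norm_fc_sub_fc hR hc hnp hj hz hw
    rw [hzw, sub_self, norm_zero, eq_comm, mul_eq_zero, norm_eq_zero, sub_eq_zero] at h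
    exact h.resolve_left hratio.ne'

end Fc

/-- **Lemma 3.3.** On `A ∪ B_0` (away from `0`) one has `|f_c(z)| = φ(|z|)`; and for each
`j ≥ 1`, `f_c` maps `B_j` bijectively onto `{|w| < φ(R_j)}`, scaling all distances by the
factor `φ(R_j)/R_j`. -/
theorem abs_fc
    (p : ℕ) [Fact p.Prime] (K : Type*) [NontriviallyNormedField K] [Algebra ℚ_[p] K]
    (hK : IsCp p K) (R : ℕ → ℝ) (hR : IsGenericRadii p R)
    (c : ℕ → K) (hc : InC p R c) :
    (∀ z : K, z ≠ 0 → z ∈ Aset R c ∪ Bset R c 0 → ‖fc p c z‖ = phi p R ‖z‖) ∧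
    (∀ j, 1 ≤ j →
      Set.BijOn (fc p c) (Bset R c j) {w : K | ‖w‖ < phi p R (R j)} ∧
      ∀ z w : K, z ∈ Bset R c j → w ∈ Bset R c j →
        ‖fc p c z - fc p c w‖ = (phi p R (R j) / R j) * ‖z - w‖) := by
  have := hK.complete
  have := IsUltrametricDist.isUltrametricDist_of_forall_norm_add_le_max_norm hK.isNonarch
  have hnp : ‖(p : K)‖ = (p : ℝ)⁻¹ := by
    simpa using hK.norm_extends p
  exact ⟨fun z _ hz => norm_fc_eq_phi hR.1 hc hnp hz, fun j hj =>
    ⟨bijOn_fc hR.1 hc hnp hj, fun z w hz hw => norm_fc_sub_fc hR.1 hc hnp hj hz hw⟩⟩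
end
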